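/- arXiv:2403.11360 — 3 statements merged into one kernel-verified Lean document; each statement's English description precedes it below -/
import Mathlib

section
/- Let $b,c>0$ with $b+c=w$ and suppose $\cos\varphi = \tanh b/\tanh c$ for some $\varphi\in(0,\pi/2)$. Then $\tanh b = \frac{1+\cos\varphi-\sqrt{(1+\cos\varphi)^2-4\tanh^2 w\cos\varphi}}{2\tanh w}$. -/
/-!
Write `t = tanh b`, `T = tanh w` and `k = cos φ = t / tanh c`. Eliminating `tanh c` from the
addition formula `T = (t + tanh c) / (1 + t tanh c)` shows that `t` is a root of
`T t² - (1 + k) t + T k = 0`. It is the smaller root because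
`1 + k - 2 T t = (t + tanh c)(1 - t tanh c) / (tanh c (1 + t tanh c)) ≥ 0`.
-/

open Real

namespace Real

theorem tanh_pos {x : ℝ} (hx : 0 < x) : 0 < tanh x := by
  rw [tanh_eq_sinh_div_cosh]
  exact div_pos (sinh_pos_iff.2 hx) (cosh_pos x)

theorem tanh_ne_zero {x : ℝ} (hx : x ≠ 0) : tanh x ≠ 0 :=
  tanh_zero ▸ tanh_injective.ne hx

theorem one_add_tanh_mul_tanh_pos (x y : ℝ) : 0 < 1 + tanh x * tanh y := by
  nlinarith [tanh_lt_one x, tanh_lt_one y, neg_one_lt_tanh x, neg_one_lt_tanh y]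

theorem tanh_add (x y : ℝ) :
    tanh (x + y) = (tanh x + tanh y) / (1 + tanh x * tanh y) := by
  have hx := (cosh_pos x).ne'
  have hy := (cosh_pos y).ne'
  simp only [tanh_eq_sinh_div_cosh, sinh_add, cosh_add]
  field_simp

end Real

theorem eq_neg_sub_sqrt_discrim_div_of_quadratic_eq_zero {a b c x : ℝ} (ha : a ≠ 0)
    (h : a * (x * x) + b * x + c = 0) (hx : 2 * a * x + b ≤ 0) :
    x = (-b - √(discrim a b c)) / (2 * a) := by
  rw [discrim_eq_sq_of_quadratic_eq_zero h, sqrt_sq_eq_abs, abs_of_nonpos hx]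
  field_simp
  ring

section RightTriangle

variable {x y : ℝ}

theorem tanh_leg_quadratic (hy : y ≠ 0) :
    tanh (x + y) * (tanh x * tanh x) + -(1 + tanh x / tanh y) * tanh x
      + tanh (x + y) * (tanh x / tanh y) = 0 := by
  have hu := tanh_ne_zero hy
  have hd := (one_add_tanh_mul_tanh_pos x y).ne'
  rw [tanh_add]
  field_simp
  ring

theorem two_mul_tanh_add_mul_tanh_le (hx : 0 ≤ x) (hy : 0 < y) :
    2 * tanh (x + y) * tanh x + -(1 + tanh x / tanh y) ≤ 0 := by
  have ht : 0 ≤ tanh x := by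
    rcases hx.eq_or_lt with rfl | hx
    · simp
    · exact (tanh_pos hx).le
  have hu := tanh_pos hy
  have hd := one_add_tanh_mul_tanh_pos x y
  have htu : tanh x * tanh y < 1 := by nlinarith [tanh_lt_one x, tanh_lt_one y]
  have key : 1 + tanh x / tanh y - 2 * tanh (x + y) * tanh x
      = (tanh x + tanh y) * (1 - tanh x * tanh y) / (tanh y * (1 + tanh x * tanh y)) := by
    rw [tanh_add]
    field_simp
    ring
  have hnonneg :
      0 ≤ (tanh x + tanh y) * (1 - tanh x * tanh y) / (tanh y * (1 + tanh x * tanh y)) := by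
    apply div_nonneg <;> nlinarith
  linarith

end RightTriangle

theorem tanh_leg_formula_general (b c w : ℝ) (hb : 0 < b) (hc : 0 < c) (hw : b + c = w)
    (φ : ℝ)
    (hcos : Real.cos φ = Real.tanh b / Real.tanh c) :
    Real.tanh b =
      (1 + Real.cos φ - Real.sqrt ((1 + Real.cos φ) ^ 2 - 4 * Real.tanh w ^ 2 * Real.cos φ)) /
        (2 * Real.tanh w) := by
  subst hw
  have hroot := eq_neg_sub_sqrt_discrim_div_of_quadratic_eq_zero
    (tanh_pos (add_pos hb hc)).ne' (tanh_leg_quadratic hc.ne')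
    (two_mul_tanh_add_mul_tanh_le hb.le hc)
  rw [discrim, hcos.symm, neg_neg] at hroot
  convert hroot using 4
  ring

theorem tanh_leg_formula (b c w : ℝ) (hb : 0 < b) (hc : 0 < c) (hw : b + c = w)
    (φ : ℝ) (hφ : φ ∈ Set.Ioo 0 (Real.pi / 2))
    (hcos : Real.cos φ = Real.tanh b / Real.tanh c) :
    Real.tanh b =
      (1 + Real.cos φ - Real.sqrt ((1 + Real.cos φ) ^ 2 - 4 * Real.tanh w ^ 2 * Real.cos φ)) /
        (2 * Real.tanh w) :=
  tanh_leg_formula_general b c w hb hc hw φ hcos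
end

section
/- Let $t\in(0,1)$ and define $h(x)=\dfrac{\arccos\frac{x\sqrt{1-t^2}}{t-x}}{\arccos\frac{x(1-xt)}{t-x}}$ for $0<x<\frac{1-\sqrt{1-t^2}}{t}$. Then $h$ is strictly increasing on this interval. -/
/-!
Put `k = 1 / √(1 - t²) > 1` and `α = arccos (x √(1 - t²) / (t - x))`, which decreases from
`π / 2` to `0` as `x` runs over the interval. The denominator of `h x` is then
`β α = arccos φ(cos α)` with `φ c = c (k + c) / (1 + k c)`, so `h x = α / β α`
(`β = angleTransform k`, `φ = cosTransform k`). Since `β 0 = 0` and `β' α = Ψ (cos α)` with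
`Ψ = angleTransformDeriv k` strictly decreasing on `[0, 1]` (its derivative has the sign of
`1 - k²`), `β` is strictly convex on `[0, π / 2]`. Hence the secant slope `β α / α` strictly
increases with `α`, and `h` strictly increases with `x`.
-/

open Real Set

noncomputable def cosTransform (k c : ℝ) : ℝ := c * (k + c) / (1 + k * c)

noncomputable def angleTransform (k α : ℝ) : ℝ := arccos (cosTransform k (cos α))

noncomputable def angleTransformDeriv (k c : ℝ) : ℝ :=
  (k + 2 * c + k * c ^ 2) / ((1 + k * c) * √(c ^ 2 + 2 * k * c + 1))

section

variable {k c : ℝ}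

lemma cosTransform_one (hk : 1 + k ≠ 0) : cosTransform k 1 = 1 := by
  rw [cosTransform, div_eq_one_iff_eq (by simpa [add_comm] using hk)]
  ring

lemma cosTransform_lt_one (hk : 0 ≤ k) (hc₀ : 0 ≤ c) (hc₁ : c < 1) :
    cosTransform k c < 1 := by
  rw [cosTransform, div_lt_one (by positivity)]
  nlinarith

lemma one_sub_cosTransform_sq (hc : 1 + k * c ≠ 0) :
    1 - cosTransform k c ^ 2 = (1 - c ^ 2) * (c ^ 2 + 2 * k * c + 1) / (1 + k * c) ^ 2 := by
  rw [cosTransform, div_pow, eq_div_iff (pow_ne_zero 2 hc), sub_mul,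
    div_mul_cancel₀ _ (pow_ne_zero 2 hc)]
  ring

lemma hasDerivAt_cosTransform (hc : 1 + k * c ≠ 0) :
    HasDerivAt (cosTransform k) ((k + 2 * c + k * c ^ 2) / (1 + k * c) ^ 2) c := by
  refine (((hasDerivAt_id' c).fun_mul ((hasDerivAt_id' c).const_add k)).fun_div
    ((hasDerivAt_id' c).const_mul k |>.const_add 1) hc).congr_deriv ?_
  ring

lemma hasDerivAt_angleTransformDeriv (hk : 0 ≤ k) (hc : 0 ≤ c) :
    HasDerivAt (angleTransformDeriv k)
      ((1 - k ^ 2) * (2 + 3 * c * k - c ^ 3 * k) /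
        ((1 + k * c) ^ 2 * (c ^ 2 + 2 * k * c + 1) * √(c ^ 2 + 2 * k * c + 1))) c := by
  have hD : 0 < 1 + k * c := by positivity
  have hQ : 0 < c ^ 2 + 2 * k * c + 1 := by positivity
  have hq := sqrt_pos.2 hQ
  have hN : HasDerivAt (fun c => k + 2 * c + k * c ^ 2) (2 + 2 * k * c) c := by
    refine (((hasDerivAt_id' c).const_mul 2 |>.const_add k).fun_add
      ((hasDerivAt_pow 2 c).const_mul k)).congr_deriv ?_
    ring
  have hQ' : HasDerivAt (fun c => c ^ 2 + 2 * k * c + 1) (2 * c + 2 * k) c := by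
    refine (((hasDerivAt_pow 2 c).fun_add ((hasDerivAt_id' c).const_mul (2 * k))).add_const 1
      ).congr_deriv ?_
    ring
  refine (hN.fun_div (((hasDerivAt_id' c).const_mul k |>.const_add 1).fun_mul
    (hQ'.sqrt hQ.ne')) (mul_pos hD hq).ne').congr_deriv ?_
  field_simp
  rw [show c * (c + 2 * k) + 1 = c ^ 2 + 2 * k * c + 1 by ring, sq_sqrt hQ.le]
  ring

lemma strictAntiOn_angleTransformDeriv (hk : 1 < k) :
    StrictAntiOn (angleTransformDeriv k) (Icc 0 1) := by
  have hk₀ : 0 ≤ k := by linarith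
  refine strictAntiOn_of_deriv_neg (convex_Icc 0 1) ?_ fun c hc => ?_
  · refine ContinuousOn.div (by fun_prop) (by fun_prop) fun c hc => ?_
    have : 0 < c ^ 2 + 2 * k * c + 1 := by nlinarith [hc.1]
    have : 0 < 1 + k * c := by nlinarith [hc.1]
    positivity
  · rw [interior_Icc] at hc
    rw [(hasDerivAt_angleTransformDeriv hk₀ hc.1.le).deriv]
    refine div_neg_of_neg_of_pos (mul_neg_of_neg_of_pos (by nlinarith) ?_) ?_
    · have h3 : 0 < 3 - c ^ 2 := by nlinarith [hc.1, hc.2]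
      nlinarith [mul_pos (mul_pos hc.1 (by linarith : 0 < k)) h3]
    · have := hc.1
      positivity

variable {α : ℝ}

lemma cos_mem_Ioo_of_mem_Ioo (hα : α ∈ Ioo 0 (π / 2)) : cos α ∈ Ioo 0 1 :=
  ⟨cos_pos_of_mem_Ioo ⟨by linarith [pi_pos, hα.1], hα.2⟩,
    by simpa using cos_lt_cos_of_nonneg_of_le_pi le_rfl (by linarith [pi_pos, hα.2]) hα.1⟩

lemma angleTransform_zero (hk : 1 + k ≠ 0) : angleTransform k 0 = 0 := by
  rw [angleTransform, cos_zero, cosTransform_one hk, arccos_one]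

lemma angleTransform_arccos (hc : c ∈ Icc (-1) 1) :
    angleTransform k (arccos c) = arccos (cosTransform k c) := by
  rw [angleTransform, cos_arccos hc.1 hc.2]

lemma angleTransform_pos (hk : 0 ≤ k) (hα : α ∈ Ioo 0 (π / 2)) : 0 < angleTransform k α :=
  arccos_pos.2 <| cosTransform_lt_one hk (cos_mem_Ioo_of_mem_Ioo hα).1.le
    (cos_mem_Ioo_of_mem_Ioo hα).2

lemma continuousOn_angleTransform (hk : 0 ≤ k) :
    ContinuousOn (angleTransform k) (Icc 0 (π / 2)) := by
  refine continuous_arccos.comp_continuousOn (ContinuousOn.div (by fun_prop) (by fun_prop)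
    fun α hα => ?_)
  have := cos_nonneg_of_mem_Icc ⟨by linarith [pi_pos, hα.1], hα.2⟩
  positivity

lemma hasDerivAt_angleTransform (hk : 0 ≤ k) (hα : α ∈ Ioo 0 (π / 2)) :
    HasDerivAt (angleTransform k) (angleTransformDeriv k (cos α)) α := by
  obtain ⟨hc₀, hc₁⟩ := cos_mem_Ioo_of_mem_Ioo hα
  have hsin : 0 < sin α := sin_pos_of_pos_of_lt_pi hα.1 (by linarith [hα.2, pi_pos])
  have hD : 0 < 1 + k * cos α := by positivity
  have hQ : 0 < cos α ^ 2 + 2 * k * cos α + 1 := by positivity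
  have hφ₁ := cosTransform_lt_one hk hc₀.le hc₁
  have hφ₀ : 0 < cosTransform k (cos α) := by unfold cosTransform; positivity
  -- the factor `sin α` of this square root cancels the `-sin α` coming from `cos' = -sin`
  have hsqrt : √(1 - cosTransform k (cos α) ^ 2) =
      sin α * √(cos α ^ 2 + 2 * k * cos α + 1) / (1 + k * cos α) := by
    rw [one_sub_cosTransform_sq hD.ne', sqrt_div' _ (sq_nonneg _), sqrt_sq hD.le, sqrt_mul',
      ← sin_eq_sqrt_one_sub_cos_sq hα.1.le (by linarith [hα.2, pi_pos])]
    exact hQ.le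
  refine ((hasDerivAt_arccos (by linarith) hφ₁.ne).comp α
    ((hasDerivAt_cosTransform hD.ne').comp α (hasDerivAt_cos α))).congr_deriv ?_
  rw [hsqrt, angleTransformDeriv]
  field_simp

lemma strictConvexOn_angleTransform (hk : 1 < k) :
    StrictConvexOn ℝ (Icc 0 (π / 2)) (angleTransform k) := by
  have hk₀ : 0 ≤ k := by linarith
  refine StrictMonoOn.strictConvexOn_of_deriv (convex_Icc _ _)
    (continuousOn_angleTransform hk₀) ?_
  rw [interior_Icc]
  refine StrictMonoOn.congr ?_ fun α hα => ((hasDerivAt_angleTransform hk₀ hα).deriv).symm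
  have hcos : StrictAntiOn cos (Ioo 0 (π / 2)) :=
    strictAntiOn_cos.mono (Ioo_subset_Icc_self.trans (Icc_subset_Icc_right (by linarith [pi_pos])))
  exact (strictAntiOn_angleTransformDeriv hk).comp hcos
    fun α hα => Ioo_subset_Icc_self (cos_mem_Ioo_of_mem_Ioo hα)

lemma strictAntiOn_div_angleTransform (hk : 1 < k) :
    StrictAntiOn (fun α => α / angleTransform k α) (Ioo 0 (π / 2)) := by
  intro α hα β hβ hαβ
  have hslope := (strictConvexOn_angleTransform hk).secant_strict_mono
    (left_mem_Icc.2 (by linarith [pi_pos])) (Ioo_subset_Icc_self hα) (Ioo_subset_Icc_self hβ)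
    hα.1.ne' hβ.1.ne' hαβ
  simp only [angleTransform_zero (by linarith : 1 + k ≠ 0), sub_zero] at hslope
  have hα₀ : 0 < angleTransform k α / α := div_pos (angleTransform_pos (by linarith) hα) hα.1
  show β / angleTransform k β < α / angleTransform k α
  rw [← inv_div (angleTransform k β), ← inv_div (angleTransform k α)]
  exact inv_strictAntiOn hα₀ (hα₀.trans hslope) hslope

end

section

variable {s t x : ℝ}

lemma strictMonoOn_mul_div_sub (hs : 0 < s) (ht : 0 < t) :
    StrictMonoOn (fun x => x * s / (t - x)) (Iio t) := by
  intro x hx y hy hxy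
  rw [div_lt_div_iff₀ (sub_pos.2 hx) (sub_pos.2 hy)]
  nlinarith [mul_pos (mul_pos hs ht) (sub_pos.2 hxy)]

lemma Ioo_one_sub_div_subset_Iio (hs : 0 < s) (hst : s ^ 2 = 1 - t ^ 2) (ht : 0 < t) :
    Ioo 0 ((1 - s) / t) ⊆ Iio t := by
  refine fun x hx => hx.2.trans ?_
  have hs₁ : s < 1 := by nlinarith
  rw [div_lt_iff₀ ht]
  nlinarith [mul_pos hs (sub_pos.2 hs₁)]

-- `(1 - s) / t = t / (1 + s)` is exactly where `x * s / (t - x)` reaches `1`.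
lemma mul_div_sub_mem_Ioo (hs : 0 < s) (hst : s ^ 2 = 1 - t ^ 2) (ht : 0 < t)
    (hx : x ∈ Ioo 0 ((1 - s) / t)) : x * s / (t - x) ∈ Ioo 0 1 := by
  have hxt : 0 < t - x := sub_pos.2 (Ioo_one_sub_div_subset_Iio hs hst ht hx)
  have hx₁ : x * t < 1 - s := (lt_div_iff₀ ht).1 hx.2
  refine ⟨div_pos (mul_pos hx.1 hs) hxt, (div_lt_one hxt).2 ?_⟩
  nlinarith [mul_pos hx.1 hs]

lemma cosTransform_inv_mul_div_sub (hs : s ≠ 0) (hst : s ^ 2 = 1 - t ^ 2) (ht : t ≠ 0)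
    (hx : x ≠ t) : cosTransform s⁻¹ (x * s / (t - x)) = x * (1 - x * t) / (t - x) := by
  have hxt : t - x ≠ 0 := sub_ne_zero.2 hx.symm
  have hden : 1 + s⁻¹ * (x * s / (t - x)) = t / (t - x) := by
    field_simp
    ring
  rw [cosTransform, hden]
  field_simp
  linear_combination x ^ 2 * hst

end

theorem h_strictMono (t : ℝ) (ht : t ∈ Set.Ioo (0:ℝ) 1)
    (h : ℝ → ℝ)
    (hh : ∀ x, h x =
      Real.arccos (x * Real.sqrt (1 - t ^ 2) / (t - x)) /
        Real.arccos (x * (1 - x * t) / (t - x))) :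
    StrictMonoOn h (Set.Ioo 0 ((1 - Real.sqrt (1 - t ^ 2)) / t)) := by
  obtain ⟨ht₀, ht₁⟩ := ht
  set s := √(1 - t ^ 2)
  have hs : 0 < s := sqrt_pos.2 (by nlinarith)
  have hst : s ^ 2 = 1 - t ^ 2 := sq_sqrt (by nlinarith)
  have hk : 1 < s⁻¹ := one_lt_inv₀ hs |>.2 (by nlinarith)
  have hA : MapsTo (fun x => x * s / (t - x)) (Ioo 0 ((1 - s) / t)) (Ioo 0 1) :=
    fun x hx => mul_div_sub_mem_Ioo hs hst ht₀ hx
  have hIcc : Ioo (0 : ℝ) 1 ⊆ Icc (-1) 1 :=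
    Ioo_subset_Icc_self.trans (Icc_subset_Icc_left (by norm_num))
  have hα : StrictAntiOn (fun x => arccos (x * s / (t - x))) (Ioo 0 ((1 - s) / t)) :=
    strictAntiOn_arccos.comp_strictMonoOn
      ((strictMonoOn_mul_div_sub hs ht₀).mono (Ioo_one_sub_div_subset_Iio hs hst ht₀))
      (hA.mono_right hIcc)
  have hαmaps :
      MapsTo (fun x => arccos (x * s / (t - x))) (Ioo 0 ((1 - s) / t)) (Ioo 0 (π / 2)) :=
    fun x hx => ⟨arccos_pos.2 (hA hx).2, arccos_lt_pi_div_two.2 (hA hx).1⟩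
  refine ((strictAntiOn_div_angleTransform hk).comp hα hαmaps).congr fun x hx => ?_
  have hxt : x ≠ t := (Ioo_one_sub_div_subset_Iio hs hst ht₀ hx).ne
  rw [hh, Function.comp_apply, angleTransform_arccos (hIcc (hA hx)),
    cosTransform_inv_mul_div_sub hs.ne' hst ht₀.ne' hxt]
end

section
/- Let $w>0$ and for odd $n\geq 3$ let $A_n(w) = 2\pi\,\frac{\arccos\frac{y_n\sqrt{1-t^2}}{t-y_n}}{\arccos\frac{y_n(1-t y_n)}{t-y_n}} - 2\pi$, where $t=\tanh w$ and $y_n = g_w(\pi/n) = \frac{1+\cos(\pi/n)-\sqrt{(1+\cos(\pi/n))^2-4t^2\cos(\pi/n)}}{2t}$. Then $\lim_{n\to\infty} A_n(w) = 2\pi\left(\cosh\frac{w}{2}-1\right)$. -/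
/-!
Write `c = cos (π / n)` and `s = √(1 - t²) = 1 / cosh w`. The number `y_n` is a root of
`t y² - (1 + c) y + t c = 0`, which says exactly that the argument of the arccosine in the
denominator of `A_n` is `c`. So `A_n = 2π · arccos (F c) / arccos c - 2π`, where
`F c = y s / (t - y)` with `y` the root above, and `F 1 = 1`. Since `arccos x ~ √(2 (1 - x))` as
`x → 1`, the quotient `arccos (F c) / arccos c` tends to `√(F' 1)` as `c → 1⁻`, and a direct
computation gives `F' 1 = (1 + s) / (2 s) = cosh² (w / 2)`.
-/

open Real Filter Topology Asymptotics

lemma isEquivalent_arcsin_nhds_zero : arcsin ~[𝓝 0] id := by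
  have h := hasDerivAt_iff_isLittleO_nhds_zero.mp
    (hasDerivAt_arcsin (x := 0) (by norm_num) (by norm_num))
  show (fun x => arcsin x - x) =o[𝓝 0] fun x => x
  simpa using h

-- For `1 < x` both sides are `0`.
lemma arccos_eq_two_mul_arcsin_sqrt {x : ℝ} (hx : -1 ≤ x) :
    arccos x = 2 * arcsin √((1 - x) / 2) := by
  rcases le_or_gt x 1 with hx1 | hx1
  · have hp : √((1 - x) / 2) ≤ 1 := sqrt_le_one.2 (by linarith)
    have hcos : cos (2 * arcsin √((1 - x) / 2)) = x := by
      rw [cos_two_mul', cos_sq', sin_arcsin (by linarith [sqrt_nonneg ((1 - x) / 2)]) hp,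
        sq_sqrt (by linarith)]
      ring
    rw [← hcos, arccos_cos (mul_nonneg two_pos.le (arcsin_nonneg.2 (sqrt_nonneg _)))
      (by linarith [arcsin_le_pi_div_two √((1 - x) / 2)]), hcos]
  · rw [arccos_eq_zero.2 hx1.le, sqrt_eq_zero_of_nonpos (by linarith), arcsin_zero, mul_zero]

lemma isEquivalent_arccos_nhds_one : arccos ~[𝓝 1] fun x => √(2 * (1 - x)) := by
  have hp : Tendsto (fun x : ℝ => √((1 - x) / 2)) (𝓝 1) (𝓝 0) := by
    have := (by fun_prop : Continuous fun x : ℝ => √((1 - x) / 2)).tendsto 1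
    simpa using this
  refine ((IsEquivalent.refl (u := fun _ => (2 : ℝ))).mul
    (isEquivalent_arcsin_nhds_zero.comp_tendsto hp)).congr_left ?_ |>.congr_right ?_
  · filter_upwards [eventually_ge_nhds (show (-1 : ℝ) < 1 by norm_num)] with x hx
    exact (arccos_eq_two_mul_arcsin_sqrt hx).symm
  · refine Eventually.of_forall fun x => ?_
    simp only [Pi.mul_apply, Function.comp_apply, id]
    rw [show 2 * (1 - x) = 2 ^ 2 * ((1 - x) / 2) by ring, sqrt_mul (by norm_num),
      sqrt_sq (by norm_num)]

lemma tendsto_arccos_comp_div_arccos {f : ℝ → ℝ} {f' : ℝ} (hf : HasDerivAt f f' 1)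
    (hf1 : f 1 = 1) :
    Tendsto (fun x => arccos (f x) / arccos x) (𝓝[<] 1) (𝓝 √f') := by
  have hslope : Tendsto (fun x => (1 - f x) / (1 - x)) (𝓝[<] 1) (𝓝 f') := by
    refine ((hasDerivAt_iff_tendsto_slope.mp hf).mono_left (nhdsLT_le_nhdsNE 1)).congr fun x => ?_
    rw [slope_def_field, hf1, ← neg_sub (f x), ← neg_sub x, neg_div_neg_eq]
  have hf_tendsto : Tendsto f (𝓝[<] 1) (𝓝 1) := by
    simpa only [hf1] using hf.continuousAt.tendsto.mono_left nhdsWithin_le_nhds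
  have hequiv : (fun x => arccos (f x) / arccos x) ~[𝓝[<] 1]
      fun x => √((1 - f x) / (1 - x)) := by
    refine ((isEquivalent_arccos_nhds_one.comp_tendsto hf_tendsto).div
      (isEquivalent_arccos_nhds_one.comp_tendsto nhdsWithin_le_nhds)).congr_right ?_
    filter_upwards [self_mem_nhdsWithin] with x (hx : x < 1)
    simp only [Pi.div_apply, Function.comp_apply]
    rw [← sqrt_div' _ (by linarith), mul_div_mul_left _ _ two_ne_zero]
  exact hequiv.symm.tendsto_nhds ((continuous_sqrt.tendsto f').comp hslope)

/-- The smaller root of `t y² - (1 + c) y + t c = 0`; the paper's `g_w θ` is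
`smallerRoot (tanh w) (cos θ)`. -/
noncomputable def smallerRoot (t c : ℝ) : ℝ :=
  (1 + c - √((1 + c) ^ 2 - 4 * t ^ 2 * c)) / (2 * t)

section
variable {t : ℝ}

lemma smallerRoot_discriminant_nonneg (ht : t ^ 2 ≤ 1) (c : ℝ) :
    0 ≤ (1 + c) ^ 2 - 4 * t ^ 2 * c := by
  rcases le_or_gt 0 c with hc | hc
  · nlinarith [sq_nonneg (1 - c)]
  · nlinarith [sq_nonneg t]

lemma smallerRoot_mul_one_sub (ht0 : t ≠ 0) (ht : t ^ 2 ≤ 1) (c : ℝ) :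
    smallerRoot t c * (1 - t * smallerRoot t c) = c * (t - smallerRoot t c) := by
  have hD := sq_sqrt (smallerRoot_discriminant_nonneg ht c)
  unfold smallerRoot
  generalize √((1 + c) ^ 2 - 4 * t ^ 2 * c) = D at hD ⊢
  field_simp
  linear_combination (-1) * hD

lemma smallerRoot_mul_one_sub_div (ht0 : 0 < t) (ht1 : t < 1) (c : ℝ) :
    smallerRoot t c * (1 - t * smallerRoot t c) / (t - smallerRoot t c) = c := by
  have hq := smallerRoot_mul_one_sub ht0.ne' (by nlinarith) c
  have hne : t - smallerRoot t c ≠ 0 := by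
    intro h
    rw [h, mul_zero, ← sub_eq_zero.mp h] at hq
    nlinarith
  rw [hq, mul_div_cancel_right₀ _ hne]

lemma smallerRoot_sqrt_discriminant_one :
    √((1 + 1) ^ 2 - 4 * t ^ 2 * 1) = 2 * √(1 - t ^ 2) := by
  rw [show (1 + 1) ^ 2 - 4 * t ^ 2 * 1 = 2 ^ 2 * (1 - t ^ 2) by ring, sqrt_mul (by norm_num),
    sqrt_sq (by norm_num)]

lemma smallerRoot_one (ht0 : t ≠ 0) :
    smallerRoot t 1 = (1 - √(1 - t ^ 2)) / t := by
  rw [smallerRoot, smallerRoot_sqrt_discriminant_one]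
  field_simp
  ring

lemma sqrt_one_sub_sq_pos_lt_one (ht0 : 0 < t) (ht1 : t < 1) :
    0 < √(1 - t ^ 2) ∧ √(1 - t ^ 2) < 1 :=
  ⟨sqrt_pos.2 (by nlinarith), (sqrt_lt' one_pos).2 (by nlinarith)⟩

lemma hasDerivAt_smallerRoot (ht0 : 0 < t) (ht1 : t < 1) :
    HasDerivAt (smallerRoot t) ((1 - √(1 - t ^ 2)) / (2 * t)) 1 := by
  have hs := (sqrt_one_sub_sq_pos_lt_one ht0 ht1).1
  have hq : HasDerivAt (fun c : ℝ => (1 + c) ^ 2 - 4 * t ^ 2 * c) (4 * (1 - t ^ 2)) 1 :=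
    ((((hasDerivAt_id' 1).const_add 1).fun_pow 2).sub
      ((hasDerivAt_id' 1).const_mul (4 * t ^ 2))).congr_deriv (by norm_num; ring)
  have hsqrt := hq.sqrt (by nlinarith)
  rw [smallerRoot_sqrt_discriminant_one] at hsqrt
  refine ((((hasDerivAt_id' 1).const_add 1).sub hsqrt).div_const (2 * t)).congr_deriv ?_
  have hs2 := sq_sqrt (show 0 ≤ 1 - t ^ 2 by nlinarith)
  field_simp
  linear_combination 4 * hs2

lemma sub_smallerRoot_one (ht0 : 0 < t) (ht1 : t < 1) :
    t - smallerRoot t 1 = √(1 - t ^ 2) * (1 - √(1 - t ^ 2)) / t := by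
  have hs2 := sq_sqrt (show 0 ≤ 1 - t ^ 2 by nlinarith)
  rw [smallerRoot_one ht0.ne']
  field_simp
  linear_combination hs2

lemma smallerRoot_mul_div_one (ht0 : 0 < t) (ht1 : t < 1) :
    smallerRoot t 1 * √(1 - t ^ 2) / (t - smallerRoot t 1) = 1 := by
  obtain ⟨hs0, hs1⟩ := sqrt_one_sub_sq_pos_lt_one ht0 ht1
  rw [sub_smallerRoot_one ht0 ht1, smallerRoot_one ht0.ne']
  have : 1 - √(1 - t ^ 2) ≠ 0 := by linarith
  field_simp

lemma hasDerivAt_smallerRoot_mul_div (ht0 : 0 < t) (ht1 : t < 1) :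
    HasDerivAt (fun c => smallerRoot t c * √(1 - t ^ 2) / (t - smallerRoot t c))
      ((1 + √(1 - t ^ 2)) / (2 * √(1 - t ^ 2))) 1 := by
  obtain ⟨hs0, hs1⟩ := sqrt_one_sub_sq_pos_lt_one ht0 ht1
  have hne : 1 - √(1 - t ^ 2) ≠ 0 := by linarith
  have hg := hasDerivAt_smallerRoot ht0 ht1
  refine ((hg.mul_const _).div ((hasDerivAt_const 1 t).sub hg) ?_).congr_deriv ?_
  · rw [Pi.sub_apply, sub_smallerRoot_one ht0 ht1]
    positivity
  rw [Pi.sub_apply, sub_smallerRoot_one ht0 ht1, smallerRoot_one ht0.ne']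
  field_simp
  ring
end

lemma sqrt_one_sub_tanh_sq (w : ℝ) : √(1 - tanh w ^ 2) = (cosh w)⁻¹ := by
  have hc := cosh_pos w
  have h : 1 - tanh w ^ 2 = (cosh w)⁻¹ ^ 2 := by
    rw [tanh_eq_sinh_div_cosh]
    field_simp
    linear_combination cosh_sq w
  rw [h, sqrt_sq (inv_pos.2 hc).le]

lemma one_add_div_eq_cosh_half_sq (w : ℝ) :
    (1 + √(1 - tanh w ^ 2)) / (2 * √(1 - tanh w ^ 2)) = cosh (w / 2) ^ 2 := by
  have hc := cosh_pos w
  have hw : cosh w = cosh (w / 2) ^ 2 + sinh (w / 2) ^ 2 := by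
    rw [← cosh_two_mul, mul_div_cancel₀ w two_ne_zero]
  rw [sqrt_one_sub_tanh_sq]
  field_simp
  linear_combination hw - cosh_sq (w / 2)

lemma tendsto_cos_pi_div_nhdsLT : Tendsto (fun n : ℕ => cos (π / n)) atTop (𝓝[<] 1) := by
  refine tendsto_nhdsWithin_iff.2 ⟨?_, ?_⟩
  · simpa only [Function.comp_def, cos_zero] using
      (continuous_cos.tendsto 0).comp (tendsto_const_div_atTop_nhds_zero_nat π)
  · filter_upwards [eventually_ge_atTop 1] with n hn
    rw [← cos_zero]
    have : (1 : ℝ) ≤ n := by exact_mod_cast hn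
    exact cos_lt_cos_of_nonneg_of_le_pi le_rfl (div_le_self pi_pos.le this) (by positivity)

theorem area_limit (w : ℝ) (hw : 0 < w) (t : ℝ) (ht : t = Real.tanh w)
    (y A : ℕ → ℝ)
    (hy : ∀ n, y n = (1 + Real.cos (Real.pi / n) -
      Real.sqrt ((1 + Real.cos (Real.pi / n)) ^ 2 - 4 * t ^ 2 * Real.cos (Real.pi / n))) / (2 * t))
    (hA : ∀ n, A n = 2 * Real.pi *
      (Real.arccos (y n * Real.sqrt (1 - t ^ 2) / (t - y n)) /
        Real.arccos (y n * (1 - t * y n) / (t - y n))) - 2 * Real.pi) :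
    Tendsto (fun k : ℕ => A (2 * k + 3)) atTop (nhds (2 * Real.pi * (Real.cosh (w / 2) - 1))) := by
  have ht0 : 0 < t := by
    rw [ht, tanh_eq_sinh_div_cosh]
    exact div_pos (sinh_pos_iff.2 hw) (cosh_pos w)
  have ht1 : t < 1 := ht ▸ tanh_lt_one w
  have hA' : ∀ n : ℕ, A n = 2 * π * (arccos (smallerRoot t (cos (π / n)) * √(1 - t ^ 2) /
      (t - smallerRoot t (cos (π / n)))) / arccos (cos (π / n))) - 2 * π := fun n => by
    rw [hA, show y n = smallerRoot t (cos (π / n)) from hy n, smallerRoot_mul_one_sub_div ht0 ht1]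
  have hlimit : √((1 + √(1 - t ^ 2)) / (2 * √(1 - t ^ 2))) = cosh (w / 2) := by
    rw [ht, one_add_div_eq_cosh_half_sq, sqrt_sq (cosh_pos _).le]
  have hratio := (tendsto_arccos_comp_div_arccos (hasDerivAt_smallerRoot_mul_div ht0 ht1)
    (smallerRoot_mul_div_one ht0 ht1)).comp tendsto_cos_pi_div_nhdsLT
  rw [hlimit] at hratio
  have hindex : Tendsto (fun k : ℕ => 2 * k + 3) atTop atTop :=
    tendsto_atTop_mono (fun k => show k ≤ 2 * k + 3 by omega) tendsto_id
  have hA_lim := ((hratio.const_mul (2 * π)).sub_const (2 * π)).comp hindex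
  rw [show 2 * π * cosh (w / 2) - 2 * π = 2 * π * (cosh (w / 2) - 1) by ring] at hA_lim
  exact hA_lim.congr fun k => (hA' _).symm
end
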